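/- Fix an integer n ≥ 1 and define, for integers i,j,k,t, β_{i,j,k}^t := C(n−2k, i−k) · Σ_{p=0}^{t} (−1)^{k−p} C(k,p) C(i−p, t−p) C(n+p−i−k, n+t−i−j). Then for all integers k, i, j, t with 0 ≤ k ≤ ⌊n/2⌋, k ≤ i ≤ n−k, k ≤ j ≤ n−k, 0 ≤ t ≤ i, t ≤ j and i+j ≤ n+t, one has β_{i,j,k}^t = β_{j,i,k}^t. -/

import Mathlib

/-- Real-valued binomial coefficient `C(a,b)` of integers, equal to `0` whenever `b < 0` or
`b > a`. -/
noncomputable def zchoose (a b : ℤ) : ℝ :=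
  if 0 ≤ b ∧ b ≤ a then ((a.toNat).choose b.toNat : ℝ) else 0

/-- `β_{i,j,k}^t = C(n−2k, i−k) · Σ_{p=0}^{t} (−1)^{k−p} C(k,p) C(i−p, t−p)
C(n+p−i−k, n+t−i−j)`, binomial coefficients being zero in degenerate ranges. -/
noncomputable def betaCoef (n i j k t : ℕ) : ℝ :=
  zchoose ((n : ℤ) - 2 * k) ((i : ℤ) - k) *
    ∑ p ∈ Finset.range (t + 1),
      (-1 : ℝ) ^ ((k : ℤ) - (p : ℤ)) * zchoose (k : ℤ) (p : ℤ) *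
        zchoose ((i : ℤ) - p) ((t : ℤ) - p) *
        zchoose ((n : ℤ) + p - i - k) ((n : ℤ) + t - i - j)

/-!
Expand `C(i−p, t−p)` and `C(n+p−i−k, n+t−i−j)` by Vandermonde's identity. The alternating sum
over `p` then collapses by binomial inversion, `∑_p (−1)^p C(q,p) C(p,b) = (−1)^q [b = q]`, and
with `m = n−2k`, `s = t−q` one is left with
`β_{i,j,k}^t = (−1)^k ∑_q (−1)^q C(k,q) C(m,s) C(m−s, i−k−s) C(n−k−i, j−k−s)`.
Since `m−s−(i−k−s) = n−k−i`, the last three factors form the multinomial coefficient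
`m! / (s! (i−k−s)! (j−k−s)! (n−k−i−(j−k−s))!)`, which is symmetric in `i` and `j`.
-/

open Finset

lemma zchoose_eq_zero {a b : ℤ} (h : ¬(0 ≤ b ∧ b ≤ a)) : zchoose a b = 0 := if_neg h

lemma zchoose_of_nonneg_of_le {a b : ℤ} (hb : 0 ≤ b) (hba : b ≤ a) :
    zchoose a b = (a.toNat.choose b.toNat : ℝ) := if_pos ⟨hb, hba⟩

lemma zchoose_natCast (a b : ℕ) : zchoose a b = (a.choose b : ℝ) := by
  by_cases h : b ≤ a
  · rw [zchoose_of_nonneg_of_le (Int.natCast_nonneg b) (by exact_mod_cast h)]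
    simp
  · rw [zchoose_eq_zero (by omega), Nat.choose_eq_zero_of_lt (by omega), Nat.cast_zero]

lemma zchoose_symm (a b : ℤ) : zchoose a (a - b) = zchoose a b := by
  by_cases h : 0 ≤ b ∧ b ≤ a
  · rw [zchoose_of_nonneg_of_le h.1 h.2, zchoose_of_nonneg_of_le (by omega) (by omega),
      show (a - b).toNat = a.toNat - b.toNat by omega, Nat.choose_symm (by omega)]
  · rw [zchoose_eq_zero h, zchoose_eq_zero (by omega)]

lemma zchoose_mul_zchoose (a b c : ℤ) :
    zchoose a b * zchoose b c = zchoose a c * zchoose (a - c) (b - c) := by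
  by_cases h : 0 ≤ c ∧ c ≤ b ∧ b ≤ a
  · obtain ⟨h1, h2, h3⟩ := h
    rw [zchoose_of_nonneg_of_le (h1.trans h2) h3, zchoose_of_nonneg_of_le h1 h2,
      zchoose_of_nonneg_of_le h1 (h2.trans h3), zchoose_of_nonneg_of_le (by omega) (by omega),
      show (a - c).toNat = a.toNat - c.toNat by omega,
      show (b - c).toNat = b.toNat - c.toNat by omega, ← Nat.cast_mul, ← Nat.cast_mul,
      Nat.choose_mul (by omega)]
  · have hl : zchoose a b * zchoose b c = 0 := by
      rcases (by omega : ¬(0 ≤ b ∧ b ≤ a) ∨ ¬(0 ≤ c ∧ c ≤ b)) with h' | h'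
      · rw [zchoose_eq_zero h', zero_mul]
      · rw [zchoose_eq_zero h', mul_zero]
    have hr : zchoose a c * zchoose (a - c) (b - c) = 0 := by
      rcases (by omega : ¬(0 ≤ c ∧ c ≤ a) ∨ ¬(0 ≤ b - c ∧ b - c ≤ a - c)) with h' | h'
      · rw [zchoose_eq_zero h', zero_mul]
      · rw [zchoose_eq_zero h', mul_zero]
    rw [hl, hr]

lemma zchoose_mul_zchoose_sub_comm (m x y : ℤ) :
    zchoose m x * zchoose (m - x) y = zchoose m y * zchoose (m - y) x := by
  rw [← zchoose_symm m x, zchoose_mul_zchoose, ← zchoose_symm (m - y) x]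
  ring_nf

lemma zchoose_mul_zchoose_sub_eq_zero {x a m : ℤ} (h : x < a ∨ m < a) (y : ℤ) :
    zchoose x a * zchoose y (m - a) = 0 := by
  rcases h with h | h
  · rw [zchoose_eq_zero (by omega), zero_mul]
  · rw [zchoose_eq_zero (a := y) (by omega), mul_zero]

lemma zchoose_add_eq_sum_range {x y : ℤ} (hx : 0 ≤ x) (hy : 0 ≤ y) (m : ℤ) {R : ℕ}
    (hR : x ≤ R ∨ m ≤ R) :
    zchoose (x + y) m = ∑ a ∈ range (R + 1), zchoose x a * zchoose y (m - a) := by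
  lift x to ℕ using hx
  lift y to ℕ using hy
  rcases lt_or_ge m 0 with hm | hm
  · rw [zchoose_eq_zero (by omega)]
    exact (sum_eq_zero fun a _ => zchoose_mul_zchoose_sub_eq_zero (Or.inr (by omega)) _).symm
  lift m to ℕ using hm
  have vandermonde :
      zchoose (x + y : ℤ) m = ∑ a ∈ range (m + 1), zchoose x a * zchoose y ((m : ℤ) - a) := by
    rw [← Nat.cast_add, zchoose_natCast, Nat.add_choose_eq,
      Finset.Nat.sum_antidiagonal_eq_sum_range_succ_mk]
    push_cast
    refine sum_congr rfl fun a ha => ?_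
    rw [zchoose_natCast, ← Nat.cast_sub (Nat.lt_succ_iff.1 (mem_range.1 ha)), zchoose_natCast]
  have extend (S : ℕ) (hS : x ≤ S ∨ m ≤ S) (hSR : S ≤ R + m) :
      ∑ a ∈ range (S + 1), zchoose x a * zchoose y ((m : ℤ) - a)
        = ∑ a ∈ range (R + m + 1), zchoose x a * zchoose y ((m : ℤ) - a) := by
    refine sum_subset (range_subset_range.2 (by omega)) fun a ha ha' => ?_
    simp only [mem_range] at ha ha'
    exact zchoose_mul_zchoose_sub_eq_zero (by omega) _
  rw [vandermonde, extend m (Or.inr le_rfl) (by omega), extend R (by omega) (by omega)]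

lemma zchoose_add_eq_sum_range_reflect {x y : ℤ} (hx : 0 ≤ x) (hy : 0 ≤ y) (m : ℤ) {R : ℕ}
    (hR : x ≤ R ∨ m ≤ R) :
    zchoose (x + y) m = ∑ q ∈ range (R + 1), zchoose x ((R : ℤ) - q) * zchoose y (m - (R - q)) := by
  rw [zchoose_add_eq_sum_range hx hy m hR, ← sum_range_reflect]
  refine sum_congr rfl fun q hq => ?_
  rw [mem_range] at hq
  rw [show ((R + 1 - 1 - q : ℕ) : ℤ) = R - q by omega]

lemma neg_one_zpow_natCast_sub (k p : ℕ) :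
    (-1 : ℝ) ^ ((k : ℤ) - p) = (-1) ^ k * (-1) ^ p := by
  rw [zpow_sub₀ (by norm_num), zpow_natCast, zpow_natCast, div_eq_mul_inv, ← inv_pow, inv_neg_one]

lemma sum_range_neg_one_pow_mul_zchoose_sub (M b R : ℕ) (h : b + M ≤ R) :
    ∑ p ∈ range (R + 1), (-1 : ℝ) ^ p * zchoose M ((p : ℤ) - b) = (-1) ^ b * 0 ^ M := by
  have support : Ico b (b + M + 1) ⊆ range (R + 1) := fun p hp => by
    simp only [mem_Ico, mem_range] at hp ⊢
    omega
  rw [← sum_subset support fun p _ hp => by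
    rw [zchoose_eq_zero (by simp only [mem_Ico] at hp; omega), mul_zero]]
  rw [sum_Ico_eq_sum_range, show b + M + 1 - b = M + 1 by omega, ← neg_add_cancel (1 : ℝ),
    add_pow, mul_sum]
  refine sum_congr rfl fun m _ => ?_
  rw [Nat.cast_add, add_sub_cancel_left, zchoose_natCast, pow_add, one_pow]
  ring

lemma sum_range_neg_one_pow_mul_zchoose_mul_zchoose_mul_zchoose (k q b R : ℕ) (hq : q ≤ R) :
    ∑ p ∈ range (R + 1),
        (-1 : ℝ) ^ p * zchoose k p * zchoose ((k : ℤ) - p) ((q : ℤ) - p) * zchoose p b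
      = if b = q then (-1) ^ q * zchoose k q else 0 := by
  have factor (p : ℕ) :
      (-1 : ℝ) ^ p * zchoose k p * zchoose ((k : ℤ) - p) ((q : ℤ) - p) * zchoose p b
        = zchoose k q * zchoose q b * ((-1) ^ p * zchoose ((q : ℤ) - b) ((p : ℤ) - b)) := by
    linear_combination (-(-1 : ℝ) ^ p * zchoose p b) * zchoose_mul_zchoose k q p +
      ((-1) ^ p * zchoose k q) * zchoose_mul_zchoose q p b
  simp only [factor, ← mul_sum]
  by_cases hbq : b ≤ q
  · rw [show (q : ℤ) - b = ((q - b : ℕ) : ℤ) by omega,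
      sum_range_neg_one_pow_mul_zchoose_sub (q - b) b R (by omega)]
    by_cases hb : b = q
    · subst hb
      rw [if_pos rfl, Nat.sub_self, pow_zero, zchoose_natCast b b, Nat.choose_self]
      push_cast
      ring
    · rw [if_neg hb, zero_pow (by omega)]
      ring
  · rw [zchoose_eq_zero (a := q) (b := b) (by omega), if_neg (by omega)]
    ring

noncomputable def betaSymm (n i j k t : ℕ) : ℝ :=
  (-1) ^ k * ∑ q ∈ range (t + 1),
    (-1) ^ q * zchoose k q * zchoose ((n : ℤ) - 2 * k) ((t : ℤ) - q) *
      (zchoose ((n : ℤ) - 2 * k - (t - q)) ((i : ℤ) - k - (t - q)) *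
        zchoose ((n : ℤ) - 2 * k - (t - q) - ((i : ℤ) - k - (t - q))) ((j : ℤ) - k - (t - q)))

lemma betaSymm_comm (n i j k t : ℕ) : betaSymm n i j k t = betaSymm n j i k t := by
  unfold betaSymm
  congr 1
  refine sum_congr rfl fun q _ => ?_
  rw [zchoose_mul_zchoose_sub_comm]

lemma betaCoef_summand_eq_sum {n i j k t p : ℕ} (hki : k ≤ i) (hin : i + k ≤ n) (hpt : p ≤ t) :
    (-1 : ℝ) ^ ((k : ℤ) - p) * zchoose k p * zchoose ((i : ℤ) - p) ((t : ℤ) - p) *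
        zchoose ((n : ℤ) + p - i - k) ((n : ℤ) + t - i - j)
      = (-1) ^ k * ∑ q ∈ range (t + 1), ∑ b ∈ range (t + 1),
          zchoose ((i : ℤ) - k) ((t : ℤ) - q) *
            zchoose ((n : ℤ) - i - k) ((n : ℤ) + t - i - j - b) *
            ((-1) ^ p * zchoose k p * zchoose ((k : ℤ) - p) ((q : ℤ) - p) * zchoose p b) := by
  by_cases hpk : p ≤ k
  · rw [show (i : ℤ) - p = (i - k) + (k - p) by ring,
      zchoose_add_eq_sum_range_reflect (R := t) (by omega) (by omega) _ (Or.inr (by omega)),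
      show (n : ℤ) + p - i - k = p + (n - i - k) by ring,
      zchoose_add_eq_sum_range (R := t) (by omega) (by omega) _ (Or.inl (by omega)),
      neg_one_zpow_natCast_sub]
    simp only [mul_sum, sum_mul]
    rw [sum_comm]
    refine sum_congr rfl fun q _ => sum_congr rfl fun b _ => ?_
    rw [show (t : ℤ) - p - (t - q) = q - p by ring]
    ring
  · simp [zchoose_eq_zero (show ¬(0 ≤ (p : ℤ) ∧ (p : ℤ) ≤ k) by omega)]

lemma betaCoef_eq_betaSymm {n i j k : ℕ} (hki : k ≤ i) (hin : i + k ≤ n) (t : ℕ) :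
    betaCoef n i j k t = betaSymm n i j k t := by
  have collapse : ∀ q ∈ range (t + 1), ∑ b ∈ range (t + 1), ∑ p ∈ range (t + 1),
      zchoose ((i : ℤ) - k) ((t : ℤ) - q) * zchoose ((n : ℤ) - i - k) ((n : ℤ) + t - i - j - b) *
        ((-1) ^ p * zchoose k p * zchoose ((k : ℤ) - p) ((q : ℤ) - p) * zchoose p b)
      = zchoose ((i : ℤ) - k) ((t : ℤ) - q) * zchoose ((n : ℤ) - i - k) ((n : ℤ) + t - i - j - q) *
        ((-1) ^ q * zchoose k q) := by
    intro q hq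
    simp only [← mul_sum, sum_range_neg_one_pow_mul_zchoose_mul_zchoose_mul_zchoose k q _ t
      (Nat.lt_succ_iff.1 (mem_range.1 hq)), mul_ite, mul_zero, sum_ite_eq', if_pos hq]
  rw [betaCoef, sum_congr rfl fun p hp => betaCoef_summand_eq_sum hki hin
      (Nat.lt_succ_iff.1 (mem_range.1 hp)), ← mul_sum, sum_comm,
    sum_congr rfl fun q _ => sum_comm, sum_congr rfl collapse, betaSymm, mul_sum, mul_sum, mul_sum]
  refine sum_congr rfl fun q _ => ?_
  have hsymm : zchoose ((n : ℤ) - i - k) ((n : ℤ) + t - i - j - q)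
      = zchoose ((n : ℤ) - 2 * k - (t - q) - ((i : ℤ) - k - (t - q))) ((j : ℤ) - k - (t - q)) := by
    rw [← zchoose_symm]
    congr 1 <;> ring
  rw [hsymm]
  linear_combination ((-1) ^ k * (-1) ^ q * zchoose k q *
    zchoose ((n : ℤ) - 2 * k - (t - q) - ((i : ℤ) - k - (t - q))) ((j : ℤ) - k - (t - q))) *
    zchoose_mul_zchoose ((n : ℤ) - 2 * k) ((i : ℤ) - k) ((t : ℤ) - q)

theorem statement15_general (n : ℕ) (k i j t : ℕ)
    (hki : k ≤ i) (hin : i + k ≤ n) (hkj : k ≤ j) (hjn : j + k ≤ n) :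
    betaCoef n i j k t = betaCoef n j i k t := by
  rw [betaCoef_eq_betaSymm hki hin, betaCoef_eq_betaSymm hkj hjn, betaSymm_comm]

/-- for `0 ≤ k ≤ ⌊n/2⌋`, `k ≤ i ≤ n−k`, `k ≤ j ≤ n−k`, `0 ≤ t ≤ i`, `t ≤ j`
and `i+j ≤ n+t`, one has `β_{i,j,k}^t = β_{j,i,k}^t`. -/
theorem statement15 (n : ℕ) (hn : 1 ≤ n) (k i j t : ℕ)
    (hk : k ≤ n / 2) (hki : k ≤ i) (hin : i + k ≤ n) (hkj : k ≤ j) (hjn : j + k ≤ n)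
    (hti : t ≤ i) (htj : t ≤ j) (hijt : i + j ≤ n + t) :
    betaCoef n i j k t = betaCoef n j i k t :=
  statement15_general n k i j t hki hin hkj hjn
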